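/- Let A be an almost Kähler–Poisson algebra with curvature tensor R. Then for all X, Y, Z, V ∈ X(A) the Bianchi identities hold: R(X,Y,Z) + R(Z,X,Y) + R(Y,Z,X) = 0, and (∇_X R)(Y,Z,V) + (∇_Y R)(Z,X,V) + (∇_Z R)(X,Y,V) = 0. -/

import Mathlib

open scoped BigOperators

namespace KPA

/-- The field of fractions of the polynomial ring `ℂ[x¹,…,xᵐ]`. -/
abbrev A (m : ℕ) := FractionRing (MvPolynomial (Fin m) ℂ)

/-- The generators `x^i` of `A m`. -/
noncomputable def Xg {m : ℕ} (i : Fin m) : A m :=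
  algebraMap (MvPolynomial (Fin m) ℂ) (A m) (MvPolynomial.X i)

/-- The image of a complex constant in `A m`. -/
noncomputable def cC {m : ℕ} (z : ℂ) : A m :=
  algebraMap (MvPolynomial (Fin m) ℂ) (A m) (MvPolynomial.C z)

/-- An almost Kähler–Poisson algebra: the field of fractions `A m` of `ℂ[x¹,…,xᵐ]`,
equipped with a ∗-structure `st` fixing the generators, a Poisson bracket `br`
compatible with ∗, and an invertible hermitian element `γ2` such that
`P^i_k P^k_l P^l_j = -γ² P^i_j` where `P^{ij} = {x^i, x^j}`. -/
structure AKP (m : ℕ) where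
  br : A m → A m → A m
  st : A m → A m
  br_add_left : ∀ a b c, br (a + b) c = br a c + br b c
  br_antisymm : ∀ a b, br a b = - br b a
  br_leibniz : ∀ a b c, br a (b * c) = br a b * c + b * br a c
  br_jacobi : ∀ a b c, br a (br b c) + br b (br c a) + br c (br a b) = 0
  br_const : ∀ (z : ℂ) (a : A m), br (cC z) a = 0
  st_add : ∀ a b, st (a + b) = st a + st b
  st_mul : ∀ a b, st (a * b) = st a * st b
  st_invol : ∀ a, st (st a) = a
  st_const : ∀ z : ℂ, st (cC z) = cC (starRingEnd ℂ z)
  st_x : ∀ i, st (Xg i) = Xg i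
  st_br : ∀ a b, st (br a b) = br (st a) (st b)
  γ2 : A m
  γ2_ne : γ2 ≠ 0
  γ2_herm : st γ2 = γ2
  akp : ∀ i j, (∑ k, ∑ l, br (Xg i) (Xg k) * br (Xg k) (Xg l) * br (Xg l) (Xg j))
      = - γ2 * br (Xg i) (Xg j)

namespace AKP

variable {m : ℕ} (S : AKP m)

/-- `P^{ij} = {x^i, x^j}`. -/
noncomputable def P (i j : Fin m) : A m := S.br (Xg i) (Xg j)

/-- `D^i(u) = γ^{-2} {u, x^k} P^i_k`. -/
noncomputable def D (u : A m) (i : Fin m) : A m := S.γ2⁻¹ * ∑ k, S.br u (Xg k) * S.P i k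

/-- `D^{ik} = D^i(x^k)`. -/
noncomputable def Dm (i k : Fin m) : A m := S.D (Xg k) i

/-- Membership in the tangent space `X(A) = {D(X) : X ∈ Der(A)}` (in components). -/
def tang (T : Fin m → A m) : Prop := ∃ V : Fin m → A m, ∀ i, T i = ∑ k, S.Dm i k * V k

/-- The tangent space `X(A)` as a submodule of `A^m` : the range of the projection `D`. -/
noncomputable def tSp : Submodule (A m) (Fin m → A m) :=
  LinearMap.range (Matrix.mulVecLin (Matrix.of fun i k => S.Dm i k))

/-- Action `X(u) = X^i D_i(u)` of a tangent vector on an element. -/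
noncomputable def act (X : Fin m → A m) (u : A m) : A m := ∑ i, X i * S.D u i

/-- The covariant derivative `∇_X Y = D^{ik} X^l D_l(Y_k) ∂_i` (in components). -/
noncomputable def nab (X Y : Fin m → A m) (i : Fin m) : A m :=
  ∑ k, S.Dm i k * ∑ l, X l * S.D (Y k) l

/-- The commutator `[X,Y]^i = X(Y^i) - Y(X^i)`. -/
noncomputable def lie (X Y : Fin m → A m) (i : Fin m) : A m := S.act X (Y i) - S.act Y (X i)

/-- The curvature `R(X,Y)Z = ∇_X ∇_Y Z - ∇_Y ∇_X Z - ∇_{[X,Y]} Z`. -/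
noncomputable def curv (X Y Z : Fin m → A m) (i : Fin m) : A m :=
  S.nab X (S.nab Y Z) i - S.nab Y (S.nab X Z) i - S.nab (S.lie X Y) Z i

/-- The bilinear form `(X,Y) = X^i Y_i`. -/
noncomputable def ipa (_S : AKP m) (X Y : Fin m → A m) : A m := ∑ i, X i * Y i

/-- `R(X,Y,Z,V) = (R(Z,V)Y, X)`. -/
noncomputable def Rq (X Y Z V : Fin m → A m) : A m := S.ipa (S.curv Z V Y) X

/-- `(∇_X R)(Y,Z,V)`, the covariant derivative of the curvature tensor. -/
noncomputable def nabR (X Y Z V : Fin m → A m) (i : Fin m) : A m :=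
  S.nab X (S.curv Y Z V) i - S.curv (S.nab X Y) Z V i
    - S.curv Y (S.nab X Z) V i - S.curv Y Z (S.nab X V) i

/-- `Π^{ij} = δ^{ij} - D^{ij}`. -/
noncomputable def Pim (i j : Fin m) : A m := (if i = j then 1 else 0) - S.Dm i j

/-- The positivity preorder: `a ≥ 0` iff `a = (∑ uᵢ* uᵢ)/(∑ vₖ* vₖ)`. -/
def pos (a : A m) : Prop :=
  ∃ (N N' : ℕ) (u : Fin N → A m) (v : Fin N' → A m),
    a = (∑ i, S.st (u i) * u i) / (∑ k, S.st (v k) * v k)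

end AKP
end KPA

/-!
The almost Kähler condition `P³ = -γ² P` makes `D = -γ⁻² P²` a symmetric idempotent with
`D P = P`. Hence every Hamiltonian vector field `{f, xⁱ}` is fixed by `D` (both sides are
derivations in `f` agreeing on generators), and every tangent vector is a combination
`c_p {xᵖ, ·}` of Hamiltonian fields. By the Jacobi identity the commutator of two such
combinations is again one, so `X(A)` is closed under `[·,·]`, acts on `A` by commutators of
derivations, and `∇` is torsion free: `∇_X Y - ∇_Y X = D [X,Y] = [X,Y]`. Both Bianchi identities
then follow from torsion freeness and the Jacobi identity for `[·,·]` alone, using only the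
additivity of `∇` in its first argument.
-/

namespace KPA

open Matrix

theorem leibniz_ext_of_isLocalization {σ R K : Type*} [CommSemiring R] [CommRing K]
    [Algebra (MvPolynomial σ R) K] (M : Submonoid (MvPolynomial σ R)) [IsLocalization M K]
    (δ₁ δ₂ : K → K)
    (add₁ : ∀ a b, δ₁ (a + b) = δ₁ a + δ₁ b) (mul₁ : ∀ a b, δ₁ (a * b) = δ₁ a * b + a * δ₁ b)
    (add₂ : ∀ a b, δ₂ (a + b) = δ₂ a + δ₂ b) (mul₂ : ∀ a b, δ₂ (a * b) = δ₂ a * b + a * δ₂ b)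
    (hC₁ : ∀ r, δ₁ (algebraMap (MvPolynomial σ R) K (MvPolynomial.C r)) = 0)
    (hC₂ : ∀ r, δ₂ (algebraMap (MvPolynomial σ R) K (MvPolynomial.C r)) = 0)
    (hgen : ∀ j, δ₁ (algebraMap (MvPolynomial σ R) K (MvPolynomial.X j))
      = δ₂ (algebraMap (MvPolynomial σ R) K (MvPolynomial.X j))) :
    ∀ u, δ₁ u = δ₂ u := by
  have hpoly (p : MvPolynomial σ R) :
      δ₁ (algebraMap (MvPolynomial σ R) K p) = δ₂ (algebraMap (MvPolynomial σ R) K p) := by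
    induction p using MvPolynomial.induction_on with
    | C r => rw [hC₁, hC₂]
    | add p q hp hq => rw [map_add, add₁, add₂, hp, hq]
    | mul_X p j hp => rw [map_mul, mul₁, mul₂, hp, hgen]
  intro u
  obtain ⟨⟨p, s⟩, hu⟩ := IsLocalization.surj M u
  have h₁ := congrArg δ₁ hu
  have h₂ := congrArg δ₂ hu
  rw [mul₁] at h₁
  rw [mul₂] at h₂
  refine (IsLocalization.map_units K s).mul_right_cancel ?_
  linear_combination h₁ - h₂ + hpoly p - u * hpoly s

namespace AKP

variable {m : ℕ} (S : AKP m)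

lemma br_add_right (a b c : A m) : S.br a (b + c) = S.br a b + S.br a c := by
  rw [S.br_antisymm, S.br_add_left, S.br_antisymm b, S.br_antisymm c]
  ring

lemma br_sub_left (a b c : A m) : S.br (a - b) c = S.br a c - S.br b c := by
  have h := S.br_add_left (a - b) b c
  rw [sub_add_cancel] at h
  linear_combination -h

lemma br_sum_right {ι : Type*} (a : A m) (s : Finset ι) (f : ι → A m) :
    S.br a (∑ x ∈ s, f x) = ∑ x ∈ s, S.br a (f x) :=
  map_sum (AddMonoidHom.mk' (S.br a) (S.br_add_right a)) f s

lemma br_leibniz_left (a b c : A m) : S.br (a * b) c = S.br a c * b + a * S.br b c := by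
  rw [S.br_antisymm, S.br_leibniz, S.br_antisymm a c, S.br_antisymm b c]
  ring

lemma br_const_right (a : A m) (z : ℂ) : S.br a (cC z) = 0 := by
  rw [S.br_antisymm, S.br_const, neg_zero]

lemma br_neg_right (a b : A m) : S.br a (-b) = -S.br a b :=
  map_neg (AddMonoidHom.mk' (S.br a) (S.br_add_right a)) b

lemma leibniz_br (a b c : A m) : S.br a (S.br b c) = S.br (S.br a b) c + S.br b (S.br a c) := by
  have h := S.br_jacobi a b c
  rw [S.br_antisymm c a, br_neg_right, S.br_antisymm c (S.br a b)] at h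
  linear_combination h

lemma D_add (u v : A m) (i : Fin m) : S.D (u + v) i = S.D u i + S.D v i := by
  simp only [D, S.br_add_left, add_mul, Finset.sum_add_distrib, mul_add]

lemma D_sub (u v : A m) (i : Fin m) : S.D (u - v) i = S.D u i - S.D v i := by
  simp only [D, S.br_sub_left, sub_mul, Finset.sum_sub_distrib, mul_sub]

lemma D_mul (u v : A m) (i : Fin m) : S.D (u * v) i = S.D u i * v + u * S.D v i := by
  simp only [D, S.br_leibniz_left, add_mul, Finset.sum_add_distrib, mul_add, Finset.mul_sum,
    Finset.sum_mul]
  congr 1 <;> exact Finset.sum_congr rfl fun _ _ => by ring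

lemma D_const (z : ℂ) (i : Fin m) : S.D (cC z) i = 0 := by
  simp [D, S.br_const]

lemma act_add (X : Fin m → A m) (u v : A m) : S.act X (u + v) = S.act X u + S.act X v := by
  simp only [act, S.D_add, mul_add, Finset.sum_add_distrib]

lemma act_sub (X : Fin m → A m) (u v : A m) : S.act X (u - v) = S.act X u - S.act X v := by
  simp only [act, S.D_sub, mul_sub, Finset.sum_sub_distrib]

lemma act_mul (X : Fin m → A m) (u v : A m) :
    S.act X (u * v) = S.act X u * v + u * S.act X v := by
  simp only [act, S.D_mul, mul_add, Finset.sum_add_distrib, Finset.mul_sum, Finset.sum_mul]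
  congr 1 <;> exact Finset.sum_congr rfl fun _ _ => by ring

lemma act_const (X : Fin m → A m) (z : ℂ) : S.act X (cC z) = 0 := by
  simp [act, S.D_const]

lemma act_zero (X : Fin m → A m) : S.act X 0 = 0 := by
  simpa using S.act_sub X 0 0

noncomputable def Pmat : Matrix (Fin m) (Fin m) (A m) := Matrix.of S.P

noncomputable def Dmat : Matrix (Fin m) (Fin m) (A m) := Matrix.of fun i k => S.Dm i k

lemma Pmat_transpose : S.Pmatᵀ = -S.Pmat := by
  ext i j
  exact S.br_antisymm _ _

lemma Pmat_cube : S.Pmat * S.Pmat * S.Pmat = -S.γ2 • S.Pmat := by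
  ext i j
  simp only [mul_apply, Finset.sum_mul, Matrix.smul_apply, smul_eq_mul, Pmat, of_apply]
  rw [Finset.sum_comm]
  exact S.akp i j

lemma Dmat_eq : S.Dmat = -S.γ2⁻¹ • (S.Pmat * S.Pmat) := by
  ext i k
  simp only [Dmat, Dm, D, Pmat, P, of_apply, Matrix.smul_apply, mul_apply, smul_eq_mul, neg_mul]
  rw [← mul_neg, ← Finset.sum_neg_distrib]
  congr 1
  exact Finset.sum_congr rfl fun t _ => by rw [S.br_antisymm (Xg t)]; ring

lemma Dmat_transpose : S.Dmatᵀ = S.Dmat := by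
  rw [Dmat_eq, transpose_smul, transpose_mul, Pmat_transpose, neg_mul_neg]

lemma Dmat_mul_Pmat : S.Dmat * S.Pmat = S.Pmat := by
  rw [Dmat_eq, smul_mul, Pmat_cube, smul_smul, neg_mul_neg, inv_mul_cancel₀ S.γ2_ne, one_smul]

lemma Dmat_mul_self : S.Dmat * S.Dmat = S.Dmat := by
  nth_rw 2 [Dmat_eq]
  rw [Matrix.mul_smul, ← Matrix.mul_assoc, Dmat_mul_Pmat, ← Dmat_eq]

noncomputable def ham (f : A m) : Fin m → A m := fun i => S.br f (Xg i)

lemma Dmat_mulVec_ham (f : A m) : S.Dmat *ᵥ S.ham f = S.ham f := by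
  funext q
  refine leibniz_ext_of_isLocalization (nonZeroDivisors _) (fun u => (S.Dmat *ᵥ S.ham u) q)
    (fun u => S.ham u q) (fun a b => ?_) (fun a b => ?_) (fun a b => S.br_add_left a b _)
    (fun a b => S.br_leibniz_left a b _) (fun z => ?_) (fun z => S.br_const z _) (fun j => ?_) f
  · simp only [mulVec, dotProduct, ham, S.br_add_left, mul_add, Finset.sum_add_distrib]
  · simp only [mulVec, dotProduct, ham, S.br_leibniz_left, mul_add, Finset.sum_add_distrib,
      Finset.mul_sum, Finset.sum_mul]
    congr 1 <;> exact Finset.sum_congr rfl fun _ _ => by ring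
  · change ∑ p, S.Dm q p * S.br (cC z) (Xg p) = 0
    simp only [S.br_const, mul_zero, Finset.sum_const_zero]
  · have h := congrFun (congrFun S.Dmat_mul_Pmat q) j
    change ∑ p, S.Dm q p * S.br (Xg j) (Xg p) = S.br (Xg j) (Xg q)
    change ∑ p, S.Dm q p * S.br (Xg p) (Xg j) = S.br (Xg q) (Xg j) at h
    rw [S.br_antisymm (Xg j) (Xg q), ← h, ← Finset.sum_neg_distrib]
    exact Finset.sum_congr rfl fun p _ => by rw [S.br_antisymm (Xg j) (Xg p), mul_neg]

lemma ham_mem_tSp (f : A m) : S.ham f ∈ S.tSp :=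
  ⟨S.ham f, S.Dmat_mulVec_ham f⟩

lemma mem_tSp_of_tang {T : Fin m → A m} (hT : S.tang T) : T ∈ S.tSp := by
  obtain ⟨V, hV⟩ := hT
  exact ⟨V, funext fun i => (hV i).symm⟩

lemma Dmat_mulVec_of_mem_tSp {T : Fin m → A m} (hT : T ∈ S.tSp) : S.Dmat *ᵥ T = T := by
  obtain ⟨V, rfl⟩ := hT
  change S.Dmat *ᵥ S.Dmat *ᵥ V = S.Dmat *ᵥ V
  rw [mulVec_mulVec, Dmat_mul_self]

lemma act_Xg {X : Fin m → A m} (hX : X ∈ S.tSp) (j : Fin m) : S.act X (Xg j) = X j := by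
  change (X ᵥ* S.Dmat) j = X j
  rw [← mulVec_transpose, Dmat_transpose, S.Dmat_mulVec_of_mem_tSp hX]

lemma act_ham (f u : A m) : S.act (S.ham f) u = S.br f u :=
  leibniz_ext_of_isLocalization (nonZeroDivisors _) (S.act (S.ham f)) (S.br f)
    (S.act_add _) (S.act_mul _) (S.br_add_right f) (S.br_leibniz f) (S.act_const _)
    (S.br_const_right f) (S.act_Xg (S.ham_mem_tSp f)) u

lemma exists_eq_vecMul_Pmat {X : Fin m → A m} (hX : X ∈ S.tSp) :
    ∃ c, X = c ᵥ* S.Pmat := by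
  obtain ⟨V, rfl⟩ := hX
  refine ⟨-S.γ2⁻¹ • V ᵥ* S.Pmat, ?_⟩
  change S.Dmat *ᵥ V = _
  rw [← Dmat_transpose, mulVec_transpose, Dmat_eq, vecMul_smul, smul_vecMul, vecMul_vecMul]

lemma act_vecMul_Pmat (c : Fin m → A m) (u : A m) :
    S.act (c ᵥ* S.Pmat) u = ∑ p, c p * S.br (Xg p) u := by
  simp only [act, vecMul, dotProduct, Finset.sum_mul, mul_assoc]
  rw [Finset.sum_comm]
  refine Finset.sum_congr rfl fun p _ => ?_
  rw [← Finset.mul_sum, ← S.act_ham]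
  rfl

lemma lie_vecMul_Pmat (c d : Fin m → A m) :
    S.lie (c ᵥ* S.Pmat) (d ᵥ* S.Pmat) = ∑ p, ∑ r,
      ((c p * S.br (Xg p) (d r)) • S.ham (Xg r) - (d r * S.br (Xg r) (c p)) • S.ham (Xg p)
        + (c p * d r) • S.ham (S.br (Xg p) (Xg r))) := by
  funext i
  -- Leibniz expansion of `[c_p H_p, d_r H_r]`; Jacobi turns `[H_p, H_r]` into `H_{{xᵖ, xʳ}}`.
  rw [lie, act_vecMul_Pmat, act_vecMul_Pmat]
  change ∑ p, c p * S.br (Xg p) (∑ r, d r * S.br (Xg r) (Xg i))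
      - ∑ r, d r * S.br (Xg r) (∑ p, c p * S.br (Xg p) (Xg i)) = _
  simp only [S.br_sum_right, S.br_leibniz, Finset.mul_sum, Finset.sum_apply, Pi.add_apply,
    Pi.sub_apply, Pi.smul_apply, smul_eq_mul, ham]
  rw [Finset.sum_comm, ← Finset.sum_sub_distrib]
  conv_rhs => rw [Finset.sum_comm]
  refine Finset.sum_congr rfl fun r _ => ?_
  rw [← Finset.sum_sub_distrib]
  refine Finset.sum_congr rfl fun p _ => ?_
  linear_combination (c p * d r) * S.leibniz_br (Xg p) (Xg r) (Xg i)

lemma lie_mem_tSp {X Y : Fin m → A m} (hX : X ∈ S.tSp) (hY : Y ∈ S.tSp) :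
    S.lie X Y ∈ S.tSp := by
  obtain ⟨c, rfl⟩ := S.exists_eq_vecMul_Pmat hX
  obtain ⟨d, rfl⟩ := S.exists_eq_vecMul_Pmat hY
  rw [lie_vecMul_Pmat]
  exact Submodule.sum_mem _ fun p _ => Submodule.sum_mem _ fun r _ =>
    add_mem (sub_mem (Submodule.smul_mem _ _ (S.ham_mem_tSp _))
      (Submodule.smul_mem _ _ (S.ham_mem_tSp _))) (Submodule.smul_mem _ _ (S.ham_mem_tSp _))

lemma act_lie {X Y : Fin m → A m} (hX : X ∈ S.tSp) (hY : Y ∈ S.tSp) (u : A m) :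
    S.act (S.lie X Y) u = S.act X (S.act Y u) - S.act Y (S.act X u) := by
  refine leibniz_ext_of_isLocalization (nonZeroDivisors _) (S.act (S.lie X Y))
    (fun u => S.act X (S.act Y u) - S.act Y (S.act X u)) (S.act_add _) (S.act_mul _)
    (fun a b => ?_) (fun a b => ?_) (S.act_const _) (fun z => ?_) (fun j => ?_) u
  · simp only [S.act_add]
    ring
  · simp only [S.act_mul, S.act_add]
    ring
  · change S.act X (S.act Y (cC z)) - S.act Y (S.act X (cC z)) = 0
    simp only [S.act_const, S.act_zero, sub_self]
  · change S.act (S.lie X Y) (Xg j) = S.act X (S.act Y (Xg j)) - S.act Y (S.act X (Xg j))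
    rw [S.act_Xg (S.lie_mem_tSp hX hY), S.act_Xg hX, S.act_Xg hY]
    rfl

lemma lie_jacobi {X Y Z : Fin m → A m} (hX : X ∈ S.tSp) (hY : Y ∈ S.tSp) (hZ : Z ∈ S.tSp) :
    S.lie X (S.lie Y Z) + S.lie Y (S.lie Z X) + S.lie Z (S.lie X Y) = 0 := by
  funext i
  simp only [Pi.add_apply, Pi.zero_apply, lie, S.act_sub, S.act_lie hX hY, S.act_lie hY hZ,
    S.act_lie hZ hX]
  ring

lemma nab_eq (X Y : Fin m → A m) : S.nab X Y = S.Dmat *ᵥ fun k => S.act X (Y k) := rfl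

lemma nab_sub_nab {X Y : Fin m → A m} (hX : X ∈ S.tSp) (hY : Y ∈ S.tSp) :
    S.nab X Y - S.nab Y X = S.lie X Y := by
  rw [nab_eq, nab_eq, ← mulVec_sub]
  exact S.Dmat_mulVec_of_mem_tSp (S.lie_mem_tSp hX hY)

lemma nab_add_left (X X' Y : Fin m → A m) : S.nab (X + X') Y = S.nab X Y + S.nab X' Y := by
  funext i
  simp only [nab, Pi.add_apply, add_mul, Finset.sum_add_distrib, mul_add]

lemma nab_sub_left (X X' Y : Fin m → A m) : S.nab (X - X') Y = S.nab X Y - S.nab X' Y := by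
  funext i
  simp only [nab, Pi.sub_apply, sub_mul, Finset.sum_sub_distrib, mul_sub]

lemma nab_neg_left (X Y : Fin m → A m) : S.nab (-X) Y = -S.nab X Y := by
  funext i
  simp only [nab, Pi.neg_apply, neg_mul, Finset.sum_neg_distrib, mul_neg]

lemma nab_zero_left (Y : Fin m → A m) : S.nab 0 Y = 0 := by
  funext i
  simp only [nab, Pi.zero_apply, zero_mul, Finset.sum_const_zero, mul_zero]

lemma nab_sub_right (X Y Y' : Fin m → A m) : S.nab X (Y - Y') = S.nab X Y - S.nab X Y' := by
  funext i
  simp only [nab, Pi.sub_apply, S.D_sub, mul_sub, Finset.sum_sub_distrib]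

lemma lie_swap (X Y : Fin m → A m) : S.lie Y X = -S.lie X Y := by
  funext i
  simp only [lie, Pi.neg_apply, neg_sub]

lemma lie_sub_left (X X' Y : Fin m → A m) : S.lie (X - X') Y = S.lie X Y - S.lie X' Y := by
  funext i
  simp only [lie, act, Pi.sub_apply, sub_mul, Finset.sum_sub_distrib, S.D_sub, mul_sub]
  ring

lemma curv_eq (X Y Z : Fin m → A m) :
    S.curv X Y Z = S.nab X (S.nab Y Z) - S.nab Y (S.nab X Z) - S.nab (S.lie X Y) Z := rfl

lemma curv_swap (X Y Z : Fin m → A m) : S.curv Y X Z = -S.curv X Y Z := by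
  rw [curv_eq, curv_eq, lie_swap, nab_neg_left]
  ring

lemma curv_sub_left (X X' Y Z : Fin m → A m) :
    S.curv (X - X') Y Z = S.curv X Y Z - S.curv X' Y Z := by
  simp only [curv_eq, nab_sub_left, nab_sub_right, lie_sub_left]
  ring

lemma nabR_eq (X Y Z V : Fin m → A m) : S.nabR X Y Z V = S.nab X (S.curv Y Z V)
    - S.curv (S.nab X Y) Z V - S.curv Y (S.nab X Z) V - S.curv Y Z (S.nab X V) := rfl

theorem bianchi_first {X Y Z : Fin m → A m} (hX : X ∈ S.tSp) (hY : Y ∈ S.tSp)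
    (hZ : Z ∈ S.tSp) : S.curv X Y Z + S.curv Z X Y + S.curv Y Z X = 0 := by
  have nab_lie {U W : Fin m → A m} (hU : U ∈ S.tSp) (hW : W ∈ S.tSp) (T : Fin m → A m) :
      S.nab T (S.lie U W) = S.nab T (S.nab U W) - S.nab T (S.nab W U) := by
    rw [← S.nab_sub_nab hU hW, nab_sub_right]
  simp only [curv_eq]
  linear_combination S.lie_jacobi hX hY hZ - nab_lie hY hZ X - nab_lie hZ hX Y - nab_lie hX hY Z
    + S.nab_sub_nab hX (S.lie_mem_tSp hY hZ) + S.nab_sub_nab hY (S.lie_mem_tSp hZ hX)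
    + S.nab_sub_nab hZ (S.lie_mem_tSp hX hY)

lemma nab_curv (X Y Z V : Fin m → A m) : S.nab X (S.curv Y Z V) = S.nab X (S.nab Y (S.nab Z V))
    - S.nab X (S.nab Z (S.nab Y V)) - S.nab X (S.nab (S.lie Y Z) V) := by
  rw [curv_eq, nab_sub_right, nab_sub_right]

lemma curv_nab_add_curv_nab {U W : Fin m → A m} (hU : U ∈ S.tSp) (hW : W ∈ S.tSp)
    (T V : Fin m → A m) :
    S.curv (S.nab U W) T V + S.curv T (S.nab W U) V = S.curv (S.lie U W) T V := by
  rw [S.curv_swap (S.nab W U), ← sub_eq_add_neg, ← curv_sub_left, S.nab_sub_nab hU hW]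

theorem bianchi_second {X Y Z : Fin m → A m} (hX : X ∈ S.tSp) (hY : Y ∈ S.tSp)
    (hZ : Z ∈ S.tSp) (V : Fin m → A m) :
    S.nabR X Y Z V + S.nabR Y Z X V + S.nabR Z X Y V = 0 := by
  have nab_jacobi : S.nab (S.lie X (S.lie Y Z)) V + S.nab (S.lie Y (S.lie Z X)) V
      + S.nab (S.lie Z (S.lie X Y)) V = 0 := by
    rw [← nab_add_left, ← nab_add_left, S.lie_jacobi hX hY hZ, nab_zero_left]
  simp only [nabR_eq, nab_curv]
  -- The triple `∇` terms cancel cyclically. Trading `∇_X ∇_{[Y,Z]} - ∇_{[Y,Z]} ∇_X` for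
  -- `R(X,[Y,Z]) + ∇_{[X,[Y,Z]]}`, the `R` terms cancel the pairs `R(∇_X Y, Z) + R(Z, ∇_Y X)`
  -- by torsion freeness, and the `∇_{[X,[Y,Z]]}` terms by Jacobi.
  linear_combination S.curv_eq X (S.lie Y Z) V + S.curv_eq Y (S.lie Z X) V
    + S.curv_eq Z (S.lie X Y) V - nab_jacobi
    - S.curv_eq Y Z (S.nab X V) - S.curv_eq Z X (S.nab Y V) - S.curv_eq X Y (S.nab Z V)
    - S.curv_swap (S.lie Y Z) X V - S.curv_swap (S.lie Z X) Y V - S.curv_swap (S.lie X Y) Z V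
    - S.curv_nab_add_curv_nab hX hY Z V - S.curv_nab_add_curv_nab hY hZ X V
    - S.curv_nab_add_curv_nab hZ hX Y V

end AKP
end KPA

theorem statement_15_general {m : ℕ} (S : KPA.AKP m) (X Y Z V : Fin m → KPA.A m)
    (hX : S.tang X) (hY : S.tang Y) (hZ : S.tang Z) :
    (∀ i, S.curv X Y Z i + S.curv Z X Y i + S.curv Y Z X i = 0) ∧
    (∀ i, S.nabR X Y Z V i + S.nabR Y Z X V i + S.nabR Z X Y V i = 0) := by
  have hX := S.mem_tSp_of_tang hX
  have hY := S.mem_tSp_of_tang hY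
  have hZ := S.mem_tSp_of_tang hZ
  exact ⟨congrFun (S.bianchi_first hX hY hZ),
    congrFun (S.bianchi_second hX hY hZ V)⟩

/-- The Bianchi identities for the curvature of an almost
Kähler–Poisson algebra: `R(X,Y,Z) + R(Z,X,Y) + R(Y,Z,X) = 0` and
`(∇_X R)(Y,Z,V) + (∇_Y R)(Z,X,V) + (∇_Z R)(X,Y,V) = 0`. -/
theorem statement_15 {m : ℕ} (S : KPA.AKP m) (X Y Z V : Fin m → KPA.A m)
    (hX : S.tang X) (hY : S.tang Y) (hZ : S.tang Z) (hV : S.tang V) :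
    (∀ i, S.curv X Y Z i + S.curv Z X Y i + S.curv Y Z X i = 0) ∧
    (∀ i, S.nabR X Y Z V i + S.nabR Y Z X V i + S.nabR Z X Y V i = 0) :=
  statement_15_general S X Y Z V hX hY hZ
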